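/- Let q ∈ L¹(ℝ) ∩ L²(ℝ). Then for every x ∈ ℝ and every λ ∈ ℂ with Im λ > 0, one has |χ(x,λ) − 1| ≤ Φ(x) · ‖q‖₂ · ‖q‖₁ / (Im λ)^{1/2}. -/

import Mathlib

open MeasureTheory Set Filter

noncomputable def Gker (q : ℝ → ℂ) (x s : ℝ) (l : ℂ) : ℂ :=
  (starRingEnd ℂ) (q s) *
    ∫ t in x..s, Complex.exp (2 * Complex.I * l * ((s : ℂ) - (t : ℂ))) * q t

noncomputable def chiIter (q : ℝ → ℂ) : ℕ → ℝ → ℂ → ℂ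
  | 0, _, _ => 1
  | n + 1, x, l => ∫ s in Set.Ioi x, Gker q x s l * chiIter q n s l

noncomputable def chiFun (q : ℝ → ℂ) (x : ℝ) (l : ℂ) : ℂ :=
  1 + ∑' n : ℕ, chiIter q (n + 1) x l

noncomputable def aFun (q : ℝ → ℂ) (l : ℂ) : ℂ := chiFun q 0 l

def CondA (q : ℝ → ℂ) (γ : ℝ) : Prop :=
  0 < γ ∧ convexHull ℝ (tsupport q) = Set.Icc 0 γ

noncomputable def normL1 (q : ℝ → ℂ) : ℝ := ∫ t : ℝ, ‖q t‖
noncomputable def normL2 (q : ℝ → ℂ) : ℝ := Real.sqrt (∫ t : ℝ, ‖q t‖ ^ 2)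
noncomputable def PhiF (q : ℝ → ℂ) (x : ℝ) : ℝ := Real.cosh (∫ s in Set.Ioi x, ‖q s‖)

def ZeroOrder (f : ℂ → ℂ) (z : ℂ) (m : ℕ) : Prop :=
  ∃ g : ℂ → ℂ, Differentiable ℂ g ∧ g z ≠ 0 ∧ ∀ w, f w = (w - z) ^ m * g w

/-! With `T x = ∫ s in Ioi x, ‖q s‖`, the kernel obeys two bounds for `0 < Im λ`:
`‖G x s λ‖ ≤ ‖q s‖ * (T x - T s)` since `|e^{2iλ(s-t)}| ≤ 1`, and, by Cauchy–Schwarz against the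
weight `e^{-2 Im λ (s-t)}`, `‖G x s λ‖ ≤ ‖q s‖ * ‖q‖₂ / (2 √(Im λ))`. Using the second bound for
`χ₁` and the first one afterwards, the identity
`∫ s in Ioi x, ‖q s‖ * (T x - T s) * T s ^ k / k! = T x ^ (k + 2) / (k + 2)!`
gives `‖χ_{n+1} x λ‖ ≤ ‖q‖₂ / (2 √(Im λ)) * T x ^ (2n+1) / (2n+1)!`. Summing yields
`‖χ x λ - 1‖ ≤ ‖q‖₂ sinh (T x) / (2 √(Im λ))`, and `sinh T ≤ T cosh T ≤ ‖q‖₁ Φ x`. -/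

open scoped Nat

lemma integral_Ioi_mul_integral_Ioi_comm {f g : ℝ → ℝ} (hf : Integrable f) (hg : Integrable g)
    (x : ℝ) :
    ∫ s in Ioi x, f s * ∫ t in Ioi s, g t = ∫ t in Ioi x, g t * ∫ s in Ioc x t, f s := by
  set F : ℝ → ℝ → ℝ := fun s t => {p : ℝ × ℝ | p.1 < p.2}.indicator (fun p => f p.1 * g p.2) (s, t)
  have hF : Integrable (Function.uncurry F)
      ((volume.restrict (Ioi x)).prod (volume.restrict (Ioi x))) :=
    (hf.integrableOn.mul_prod hg.integrableOn).indicator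
      (measurableSet_lt measurable_fst measurable_snd)
  have h_fst : ∀ s ∈ Ioi x, ∫ t in Ioi x, F s t = f s * ∫ t in Ioi s, g t := by
    intro s hs
    have hFs : F s = fun t => f s * (Ioi s).indicator g t := by
      ext t; by_cases h : s < t <;> simp [F, indicator, h]
    rw [hFs, integral_const_mul, setIntegral_indicator measurableSet_Ioi,
      inter_eq_right.2 (Ioi_subset_Ioi (le_of_lt hs))]
  have h_snd : ∀ t ∈ Ioi x, ∫ s in Ioi x, F s t = g t * ∫ s in Ioc x t, f s := by
    intro t _
    have hFt : (F · t) = fun s => g t * (Iio t).indicator f s := by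
      ext s; by_cases h : s < t <;> simp [F, indicator, h, mul_comm]
    rw [hFt, integral_const_mul, setIntegral_indicator measurableSet_Iio, Ioi_inter_Iio,
      integral_Ioc_eq_integral_Ioo]
  rw [← setIntegral_congr_fun measurableSet_Ioi h_fst, integral_integral_swap hF,
    setIntegral_congr_fun measurableSet_Ioi h_snd]

lemma Real.sinh_le_mul_cosh {x : ℝ} (hx : 0 ≤ x) : Real.sinh x ≤ x * Real.cosh x :=
  hasSum_le (fun n => calc
      x ^ (2 * n + 1) / (2 * n + 1)! ≤ x ^ (2 * n + 1) / (2 * n)! :=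
        div_le_div_of_nonneg_left (by positivity) (by positivity)
          (by exact_mod_cast Nat.factorial_le (Nat.le_succ _))
      _ = x * (x ^ (2 * n) / (2 * n)!) := by ring)
    (Real.hasSum_sinh x) ((Real.hasSum_cosh x).mul_left x)

lemma integral_Ioc_exp_neg_mul_sub_le {a : ℝ} (ha : 0 < a) (x s : ℝ) :
    ∫ t in Ioc x s, Real.exp (-(a * (s - t))) ≤ 1 / a := by
  have hexp : ∀ t, Real.exp (-(a * (s - t))) = Real.exp (a * t) * Real.exp (-(a * s)) :=
    fun t => by rw [← Real.exp_add]; ring_nf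
  simp_rw [hexp]
  calc ∫ t in Ioc x s, Real.exp (a * t) * Real.exp (-(a * s))
      ≤ ∫ t in Iic s, Real.exp (a * t) * Real.exp (-(a * s)) :=
        setIntegral_mono_set ((integrableOn_exp_mul_Iic ha s).mul_const _)
          (ae_of_all _ fun t => by positivity) Ioc_subset_Iic_self.eventuallyLE
    _ = 1 / a := by
        rw [integral_mul_const, integral_exp_mul_Iic ha, div_mul_eq_mul_div, ← Real.exp_add,
          add_neg_cancel, Real.exp_zero]

noncomputable def tailIntegral (f : ℝ → ℝ) (x : ℝ) : ℝ := ∫ s in Ioi x, f s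

section tailIntegral

variable {f : ℝ → ℝ}

lemma tailIntegral_nonneg (hf0 : 0 ≤ f) (x : ℝ) : 0 ≤ tailIntegral f x :=
  setIntegral_nonneg measurableSet_Ioi fun s _ => hf0 s

lemma tailIntegral_antitone (hf : Integrable f) (hf0 : 0 ≤ f) : Antitone (tailIntegral f) :=
  fun _ _ hxy => setIntegral_mono_set hf.integrableOn (ae_of_all _ hf0)
    (Ioi_subset_Ioi hxy).eventuallyLE

lemma tailIntegral_le_integral (hf : Integrable f) (hf0 : 0 ≤ f) (x : ℝ) :
    tailIntegral f x ≤ ∫ s, f s :=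
  setIntegral_le_integral hf (ae_of_all _ hf0)

lemma integral_Ioc_eq_tailIntegral_sub (hf : Integrable f) {x t : ℝ} (hxt : x ≤ t) :
    ∫ s in Ioc x t, f s = tailIntegral f x - tailIntegral f t := by
  rw [eq_sub_iff_add_eq, tailIntegral, tailIntegral, ← setIntegral_union (Ioc_disjoint_Ioi le_rfl)
    measurableSet_Ioi hf.integrableOn hf.integrableOn, Ioc_union_Ioi_eq_Ioi hxt]

lemma integrable_mul_tailIntegral_pow (hf : Integrable f) (hf0 : 0 ≤ f) (k : ℕ) :
    Integrable fun s => f s * tailIntegral f s ^ k := by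
  refine (hf.mul_const ((∫ s, f s) ^ k)).mono'
    (hf.1.mul ((tailIntegral_antitone hf hf0).measurable.pow_const k).aestronglyMeasurable)
    (ae_of_all _ fun s => ?_)
  have hT := tailIntegral_nonneg hf0 s
  rw [Real.norm_of_nonneg (mul_nonneg (hf0 s) (pow_nonneg hT k))]
  gcongr
  · exact hf0 s
  · exact tailIntegral_le_integral hf hf0 s

lemma integral_mul_tailIntegral_pow (hf : Integrable f) (hf0 : 0 ≤ f) (k : ℕ) (x : ℝ) :
    ∫ s in Ioi x, f s * tailIntegral f s ^ k = tailIntegral f x ^ (k + 1) / (k + 1) := by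
  induction k generalizing x with
  | zero => simp [tailIntegral]
  | succ k ih =>
    set T := tailIntegral f
    set L := ∫ s in Ioi x, f s * T s ^ (k + 1)
    have hg := integrable_mul_tailIntegral_pow hf hf0 k
    have hg' := integrable_mul_tailIntegral_pow hf hf0 (k + 1)
    -- Fubini on the triangle `x < s < t` turns the identity for `k` into a linear equation for `L`.
    have hswap := integral_Ioi_mul_integral_Ioi_comm hf hg x
    have hlhs : ∫ s in Ioi x, f s * ∫ t in Ioi s, f t * T t ^ k = L / (k + 1) := by
      rw [← integral_div]
      exact setIntegral_congr_fun measurableSet_Ioi fun s _ => by rw [ih]; ring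
    have hrhs : ∫ t in Ioi x, f t * T t ^ k * ∫ s in Ioc x t, f s
        = T x * (T x ^ (k + 1) / (k + 1)) - L := by
      rw [← ih x, ← integral_const_mul, ← integral_sub (hg.integrableOn.const_mul _)
        hg'.integrableOn]
      refine setIntegral_congr_fun measurableSet_Ioi fun t ht => ?_
      rw [integral_Ioc_eq_tailIntegral_sub hf (le_of_lt ht)]
      ring
    rw [hlhs, hrhs] at hswap
    push_cast
    field_simp at hswap ⊢
    linear_combination hswap

lemma integrable_mul_tailIntegral_sub_mul_pow (hf : Integrable f) (hf0 : 0 ≤ f) (k : ℕ)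
    (x : ℝ) :
    Integrable fun s => f s * (tailIntegral f x - tailIntegral f s) * tailIntegral f s ^ k := by
  have hexpand : (fun s => f s * (tailIntegral f x - tailIntegral f s) * tailIntegral f s ^ k) =
      fun s => tailIntegral f x * (f s * tailIntegral f s ^ k) -
        f s * tailIntegral f s ^ (k + 1) := by
    ext s; ring
  rw [hexpand]
  exact ((integrable_mul_tailIntegral_pow hf hf0 k).const_mul _).sub
    (integrable_mul_tailIntegral_pow hf hf0 (k + 1))

lemma integral_mul_tailIntegral_sub_mul_pow_div_factorial (hf : Integrable f) (hf0 : 0 ≤ f)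
    (k : ℕ) (x : ℝ) :
    ∫ s in Ioi x, f s * (tailIntegral f x - tailIntegral f s) * tailIntegral f s ^ k / k ! =
      tailIntegral f x ^ (k + 2) / (k + 2)! := by
  set T := tailIntegral f
  have hexpand : ∀ s, f s * (T x - T s) * T s ^ k / k ! =
      T x / k ! * (f s * T s ^ k) - 1 / k ! * (f s * T s ^ (k + 1)) := fun s => by ring
  simp_rw [hexpand]
  rw [integral_sub ((integrable_mul_tailIntegral_pow hf hf0 k).integrableOn.const_mul _)
      ((integrable_mul_tailIntegral_pow hf hf0 (k + 1)).integrableOn.const_mul _),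
    integral_const_mul, integral_const_mul, integral_mul_tailIntegral_pow hf hf0,
    integral_mul_tailIntegral_pow hf hf0, Nat.factorial_succ, Nat.factorial_succ]
  push_cast
  field_simp
  ring

end tailIntegral

section kernel

variable {q : ℝ → ℂ} {l : ℂ}

lemma norm_Gker_le {x s : ℝ} (hxs : x ≤ s) :
    ‖Gker q x s l‖ ≤ ‖q s‖ * ∫ t in Ioc x s, Real.exp (-(2 * l.im * (s - t))) * ‖q t‖ := by
  rw [Gker, norm_mul, RCLike.norm_conj]
  gcongr
  refine (intervalIntegral.norm_integral_le_integral_norm_uIoc).trans_eq ?_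
  rw [uIoc_of_le hxs]
  refine integral_congr_ae (ae_of_all _ fun t => ?_)
  simp [Complex.norm_exp, Complex.mul_re, Complex.mul_im]

lemma norm_Gker_le_tailIntegral_sub (hq : Integrable q) (hl : 0 ≤ l.im) {x s : ℝ} (hxs : x ≤ s) :
    ‖Gker q x s l‖ ≤ ‖q s‖ * (tailIntegral (‖q ·‖) x - tailIntegral (‖q ·‖) s) := by
  refine (norm_Gker_le hxs).trans ?_
  rw [← integral_Ioc_eq_tailIntegral_sub hq.norm hxs]
  refine mul_le_mul_of_nonneg_left ?_ (norm_nonneg _)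
  refine integral_mono_of_nonneg (ae_of_all _ fun t => by positivity) hq.norm.integrableOn
    ((ae_restrict_iff' measurableSet_Ioc).2 (ae_of_all _ fun t ht => ?_))
  have hexp : Real.exp (-(2 * l.im * (s - t))) ≤ 1 := by
    rw [Real.exp_le_one_iff]; nlinarith [ht.2]
  simpa using mul_le_of_le_one_left (norm_nonneg (q t)) hexp

lemma integral_Ioc_exp_mul_norm_le_normL2 (hq : MemLp q 2) {σ : ℝ} (hσ : 0 < σ) {x s : ℝ} :
    ∫ t in Ioc x s, Real.exp (-(2 * σ * (s - t))) * ‖q t‖ ≤ normL2 q / (2 * √σ) := by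
  set μ := volume.restrict (Ioc x s)
  have hexp : MemLp (fun t => Real.exp (-(2 * σ * (s - t)))) (ENNReal.ofReal 2) μ := by
    refine MemLp.of_bound (by fun_prop) 1 ((ae_restrict_iff' measurableSet_Ioc).2
      (ae_of_all _ fun t ht => ?_))
    rw [Real.norm_of_nonneg (Real.exp_pos _).le, Real.exp_le_one_iff]
    nlinarith [ht.2]
  have hq' : MemLp (‖q ·‖) (ENNReal.ofReal 2) μ := by
    rw [ENNReal.ofReal_ofNat]; exact hq.norm.restrict _
  refine (integral_mul_le_Lp_mul_Lq_of_nonneg (μ := μ) Real.HolderConjugate.two_two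
    (ae_of_all _ fun t => (Real.exp_pos _).le) (ae_of_all _ fun t => norm_nonneg _)
    hexp hq').trans ?_
  simp_rw [← Real.exp_mul, Real.rpow_two, ← Real.sqrt_eq_rpow]
  have hexp_sq : √(∫ t, Real.exp (-(2 * σ * (s - t)) * 2) ∂μ) ≤ 1 / (2 * √σ) := by
    have h4σ : 0 < 4 * σ := by positivity
    rw [Real.sqrt_le_iff]
    refine ⟨by positivity, ?_⟩
    have hsq : (1 / (2 * √σ)) ^ 2 = 1 / (4 * σ) := by
      rw [div_pow, mul_pow, Real.sq_sqrt hσ.le]; ring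
    calc ∫ t, Real.exp (-(2 * σ * (s - t)) * 2) ∂μ
          = ∫ t in Ioc x s, Real.exp (-(4 * σ * (s - t))) :=
            integral_congr_ae (ae_of_all _ fun t => by ring_nf)
      _ ≤ 1 / (4 * σ) := integral_Ioc_exp_neg_mul_sub_le h4σ x s
      _ = (1 / (2 * √σ)) ^ 2 := hsq.symm
  have hq_sq : √(∫ t, ‖q t‖ ^ 2 ∂μ) ≤ normL2 q :=
    Real.sqrt_le_sqrt (setIntegral_le_integral (hq.integrable_norm_pow two_ne_zero)
      (ae_of_all _ fun t => by positivity))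
  calc _ ≤ 1 / (2 * √σ) * normL2 q := by gcongr
    _ = normL2 q / (2 * √σ) := by ring

lemma norm_Gker_le_normL2 (hq : MemLp q 2) (hl : 0 < l.im) {x s : ℝ} (hxs : x ≤ s) :
    ‖Gker q x s l‖ ≤ ‖q s‖ * (normL2 q / (2 * √l.im)) :=
  (norm_Gker_le hxs).trans (mul_le_mul_of_nonneg_left
    (integral_Ioc_exp_mul_norm_le_normL2 hq hl) (norm_nonneg _))

lemma norm_chiIter_succ_le (hq1 : Integrable q) (hq2 : MemLp q 2) (hl : 0 < l.im) (n : ℕ)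
    (x : ℝ) :
    ‖chiIter q (n + 1) x l‖ ≤
      normL2 q / (2 * √l.im) * (tailIntegral (‖q ·‖) x ^ (2 * n + 1) / (2 * n + 1)!) := by
  set f : ℝ → ℝ := (‖q ·‖)
  have hf : Integrable f := hq1.norm
  have hf0 : 0 ≤ f := fun s => norm_nonneg _
  set D := normL2 q / (2 * √l.im)
  induction n generalizing x with
  | zero =>
    calc ‖chiIter q 1 x l‖ ≤ ∫ s in Ioi x, f s * D := by
          refine norm_integral_le_of_norm_le (hf.mul_const D).integrableOn
            ((ae_restrict_iff' measurableSet_Ioi).2 (ae_of_all _ fun s hs => ?_))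
          simpa [chiIter] using norm_Gker_le_normL2 hq2 hl (le_of_lt hs)
      _ = D * (tailIntegral f x ^ (2 * 0 + 1) / (2 * 0 + 1)!) := by
          rw [integral_mul_const]; simp [tailIntegral, mul_comm]
  | succ n ih =>
    set k := 2 * n + 1
    calc ‖chiIter q (n + 1 + 1) x l‖
        ≤ ∫ s in Ioi x, D * (f s * (tailIntegral f x - tailIntegral f s) *
            tailIntegral f s ^ k / k !) := by
          refine norm_integral_le_of_norm_le
            (((integrable_mul_tailIntegral_sub_mul_pow hf hf0 k x).div_const _).const_mul D
              ).integrableOn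
            ((ae_restrict_iff' measurableSet_Ioi).2 (ae_of_all _ fun s hs => ?_))
          calc ‖Gker q x s l * chiIter q (n + 1) s l‖
              ≤ f s * (tailIntegral f x - tailIntegral f s) * (D * (tailIntegral f s ^ k / k !)) :=
                norm_mul_le_of_le (norm_Gker_le_tailIntegral_sub hq1 hl.le (le_of_lt hs)) (ih s)
            _ = _ := by ring
      _ = D * (tailIntegral f x ^ (2 * (n + 1) + 1) / (2 * (n + 1) + 1)!) := by
          rw [integral_const_mul, integral_mul_tailIntegral_sub_mul_pow_div_factorial hf hf0,
            show 2 * (n + 1) + 1 = k + 2 by ring]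

lemma norm_chiFun_sub_one_le (hq1 : Integrable q) (hq2 : MemLp q 2) (hl : 0 < l.im) (x : ℝ) :
    ‖chiFun q x l - 1‖ ≤ normL2 q / (2 * √l.im) * Real.sinh (tailIntegral (‖q ·‖) x) := by
  rw [chiFun, add_sub_cancel_left]
  exact tsum_of_norm_bounded ((Real.hasSum_sinh _).mul_left _)
    (norm_chiIter_succ_le hq1 hq2 hl · x)

end kernel

theorem stmt14 (q : ℝ → ℂ) (hq1 : Integrable q) (hq2 : MemLp q 2) :
    ∀ (x : ℝ) (l : ℂ), 0 < l.im →
      ‖chiFun q x l - 1‖ ≤ PhiF q x * normL2 q * normL1 q / Real.sqrt l.im := by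
  intro x l hl
  set T := tailIntegral (‖q ·‖) x
  have hT : 0 ≤ T := tailIntegral_nonneg (fun s => norm_nonneg _) x
  have hT_le : T ≤ normL1 q := tailIntegral_le_integral hq1.norm (fun s => norm_nonneg _) x
  have hsqrt : 0 < √l.im := Real.sqrt_pos.2 hl
  have hD : normL2 q / (2 * √l.im) ≤ normL2 q / √l.im :=
    div_le_div_of_nonneg_left (Real.sqrt_nonneg _) hsqrt (by linarith)
  have hsinh : Real.sinh T ≤ normL1 q * Real.cosh T :=
    (Real.sinh_le_mul_cosh hT).trans (mul_le_mul_of_nonneg_right hT_le (Real.cosh_pos T).le)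
  have hPhi : PhiF q x = Real.cosh T := rfl
  calc ‖chiFun q x l - 1‖ ≤ normL2 q / (2 * √l.im) * Real.sinh T :=
        norm_chiFun_sub_one_le hq1 hq2 hl x
    _ ≤ normL2 q / √l.im * (normL1 q * Real.cosh T) :=
        mul_le_mul hD hsinh (Real.sinh_nonneg_iff.2 hT)
          (div_nonneg (Real.sqrt_nonneg _) hsqrt.le)
    _ = PhiF q x * normL2 q * normL1 q / √l.im := by
        rw [hPhi]; ring
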